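/- arXiv:1706.02759 — 2 statements merged into one kernel-verified Lean document; each statement's English description precedes it below -/
import Mathlib

section
/- For every dimension d ≥ 1 and all vectors u, v ∈ ℝ^d with v ≠ 0 and u + v ≠ 0, one has |log(|u+v|/|v|)| ≤ √(|u|/|v|) + √(|u|/|u+v|). -/
/-!
Write `a = ‖u + v‖` and `b = ‖v‖`. Since `x ≤ sinh x` for `x ≥ 0`, applied at `x = log √(a/b)`,
the logarithmic mean dominates the geometric one: `|log (a / b)| ≤ |a - b| / √(a b)`.
The triangle inequality gives `|a - b| ≤ ‖u‖ ≤ a + b`, hence `√‖u‖ ≤ √a + √b`, and then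
`‖u‖ / √(a b) ≤ √‖u‖ (√a + √b) / √(a b) = √(‖u‖ / b) + √(‖u‖ / a)`.
-/

open Real

lemma Real.two_mul_log_le_sub_inv {t : ℝ} (ht : 1 ≤ t) : 2 * log t ≤ t - t⁻¹ := by
  have h := self_le_sinh_iff.mpr (log_nonneg ht)
  rw [sinh_log (by linarith)] at h
  linarith

lemma Real.abs_log_div_le_abs_sub_div_sqrt_mul {a b : ℝ} (ha : 0 < a) (hb : 0 < b) :
    |log (a / b)| ≤ |a - b| / √(a * b) := by
  wlog hba : b ≤ a generalizing a b
  · rw [← abs_neg, ← log_inv, inv_div, abs_sub_comm, mul_comm]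
    exact this hb ha (le_of_not_ge hba)
  have hA : 0 < √a := sqrt_pos.mpr ha
  have hB : 0 < √b := sqrt_pos.mpr hb
  have ht : 1 ≤ √a / √b := (one_le_div hB).mpr (sqrt_le_sqrt hba)
  have hlog : log (a / b) = 2 * log (√a / √b) := by
    rw [← sqrt_div ha.le, log_sqrt (div_nonneg ha.le hb.le)]; ring
  have hsub : √a / √b - (√a / √b)⁻¹ = (a - b) / √(a * b) := by
    rw [sqrt_mul ha.le]
    field_simp
    rw [sq_sqrt ha.le, sq_sqrt hb.le]
  rw [abs_of_nonneg (log_nonneg ((one_le_div hb).mpr hba)), abs_of_nonneg (sub_nonneg.mpr hba),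
    hlog, ← hsub]
  exact two_mul_log_le_sub_inv ht

lemma Real.sqrt_add_le_add_sqrt {a b : ℝ} (ha : 0 ≤ a) (hb : 0 ≤ b) : √(a + b) ≤ √a + √b := by
  rw [sqrt_le_iff]
  refine ⟨by positivity, ?_⟩
  nlinarith [sq_sqrt ha, sq_sqrt hb, mul_nonneg (sqrt_nonneg a) (sqrt_nonneg b)]

lemma Real.div_sqrt_mul_le_sqrt_div_add_sqrt_div {a b c : ℝ} (ha : 0 < a) (hb : 0 < b)
    (hc : 0 ≤ c) (hcab : c ≤ a + b) : c / √(a * b) ≤ √(c / b) + √(c / a) := by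
  have hA : 0 < √a := sqrt_pos.mpr ha
  have hB : 0 < √b := sqrt_pos.mpr hb
  have hC : √c ≤ √a + √b := (sqrt_le_sqrt hcab).trans (sqrt_add_le_add_sqrt ha.le hb.le)
  calc c / √(a * b) = √c * √c / (√a * √b) := by rw [mul_self_sqrt hc, sqrt_mul ha.le]
    _ ≤ √c * (√a + √b) / (√a * √b) := by gcongr
    _ = √(c / b) + √(c / a) := by
      rw [sqrt_div hc, sqrt_div hc]
      field_simp

theorem lemma1_log_inequality_general (d : ℕ)
    (u v : EuclideanSpace ℝ (Fin d)) (hv : v ≠ 0) (huv : u + v ≠ 0) :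
    |Real.log (‖u + v‖ / ‖v‖)| ≤
      Real.sqrt (‖u‖ / ‖v‖) + Real.sqrt (‖u‖ / ‖u + v‖) := by
  have ha : 0 < ‖u + v‖ := norm_pos_iff.mpr huv
  have hb : 0 < ‖v‖ := norm_pos_iff.mpr hv
  have hdiff : |‖u + v‖ - ‖v‖| ≤ ‖u‖ := by simpa using abs_norm_sub_norm_le (u + v) v
  have hsum : ‖u‖ ≤ ‖u + v‖ + ‖v‖ := by simpa using norm_sub_le (u + v) v
  calc |log (‖u + v‖ / ‖v‖)| ≤ |‖u + v‖ - ‖v‖| / √(‖u + v‖ * ‖v‖) :=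
        abs_log_div_le_abs_sub_div_sqrt_mul ha hb
    _ ≤ ‖u‖ / √(‖u + v‖ * ‖v‖) := by gcongr
    _ ≤ √(‖u‖ / ‖v‖) + √(‖u‖ / ‖u + v‖) :=
        div_sqrt_mul_le_sqrt_div_add_sqrt_div ha hb (norm_nonneg u) hsum

theorem lemma1_log_inequality (d : ℕ) (hd : 1 ≤ d)
    (u v : EuclideanSpace ℝ (Fin d)) (hv : v ≠ 0) (huv : u + v ≠ 0) :
    |Real.log (‖u + v‖ / ‖v‖)| ≤
      Real.sqrt (‖u‖ / ‖v‖) + Real.sqrt (‖u‖ / ‖u + v‖) :=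
  lemma1_log_inequality_general d u v hv huv
end

section
/- For every α with 0 < α < 2 there exists a constant C = C(α) > 0 such that for all x ∈ ℝ² with x ≠ 0 and all t > 0, ∫_0^t ∫_{ℝ²} p_s(y) · |y − x|^{−α} dy ds ≤ C · t · |x|^{−α}. -/
/-!
Split the space integral at `‖y - x‖ = ‖x‖ / 2`. Far from `x`, `‖y - x‖ ^ (-α) ≤ (‖x‖ / 2) ^ (-α)`
and `p d s` has total mass one. Near `x` we have `‖y‖ ≥ ‖x‖ / 2`, so `p d s y ≲ ‖x‖ ^ (-d)`
uniformly in `s` (because `v ^ k * exp (-v)` is bounded), while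
`∫ z in ball 0 (‖x‖ / 2), ‖z‖ ^ (-α) ≍ ‖x‖ ^ (d - α)` since `α < d`. So the space integral is
`≲ ‖x‖ ^ (-α)` for every `s > 0`, and integrating over `s ∈ (0, t]` gives the factor `t`.
-/

/-- Transition density of `d`-dimensional Brownian motion. -/
noncomputable def p (d : ℕ) (t : ℝ) (y : EuclideanSpace ℝ (Fin d)) : ℝ :=
  (2 * Real.pi * t) ^ (-(d : ℝ) / 2) * Real.exp (-‖y‖ ^ 2 / (2 * t))

open Real MeasureTheory Metric Set

lemma rpow_mul_exp_neg_le {k : ℝ} (hk : 0 < k) {v : ℝ} (hv : 0 ≤ v) :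
    v ^ k * exp (-v) ≤ (k / exp 1) ^ k := by
  calc v ^ k * exp (-v) = (k * (v / k * exp (-(v / k)))) ^ k := by
        rw [← mul_assoc, mul_div_cancel₀ _ hk.ne', mul_rpow hv (exp_pos _).le, ← exp_mul]
        congr 2
        field_simp
    _ ≤ (k * exp (-1)) ^ k := by
        gcongr
        exact mul_exp_neg_le_exp_neg_one _
    _ = (k / exp 1) ^ k := by rw [exp_neg, div_eq_mul_inv]

section Radial

open Module

variable {E : Type*} [NormedAddCommGroup E] [NormedSpace ℝ E] [FiniteDimensional ℝ E]
  [MeasurableSpace E] [BorelSpace E] [Nontrivial E] (μ : Measure E) [μ.IsAddHaarMeasure]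

lemma integral_ball_norm_rpow {α r : ℝ} (hα : α < finrank ℝ E) (hr : 0 < r) :
    ∫ z in ball 0 r, ‖z‖ ^ (-α) ∂μ =
      finrank ℝ E * μ.real (ball 0 1) * (r ^ (finrank ℝ E - α) / (finrank ℝ E - α)) := by
  set n := finrank ℝ E
  have hn : 1 ≤ n := finrank_pos
  have hradial : ∫ y in Ioi (0 : ℝ), y ^ (n - 1) • (Iio r).indicator (· ^ (-α)) y =
      r ^ (n - α) / (n - α) := by
    calc ∫ y in Ioi (0 : ℝ), y ^ (n - 1) • (Iio r).indicator (· ^ (-α)) y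
        = ∫ y in Ioi (0 : ℝ), (Iio r).indicator (fun y => y ^ ((n : ℝ) - 1 - α)) y := by
          refine setIntegral_congr_fun measurableSet_Ioi fun y (hy : 0 < y) => ?_
          by_cases hyr : y < r
          · simp only [indicator_of_mem (show y ∈ Iio r from hyr), smul_eq_mul]
            rw [sub_eq_add_neg _ α, rpow_add hy, ← rpow_natCast, Nat.cast_sub hn, Nat.cast_one]
          · simp [indicator_of_notMem (show y ∉ Iio r from hyr)]
      _ = ∫ y in (0 : ℝ)..r, y ^ ((n : ℝ) - 1 - α) := by
          rw [setIntegral_indicator measurableSet_Iio, Ioi_inter_Iio,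
            ← integral_Ioc_eq_integral_Ioo, intervalIntegral.integral_of_le hr.le]
      _ = r ^ (n - α) / (n - α) := by
          rw [integral_rpow (Or.inl (by linarith)), zero_rpow (by linarith)]
          ring_nf
  calc ∫ z in ball 0 r, ‖z‖ ^ (-α) ∂μ = ∫ z, (Iio r).indicator (· ^ (-α)) ‖z‖ ∂μ := by
        rw [← integral_indicator measurableSet_ball]
        congr 1 with z
        by_cases hz : ‖z‖ < r <;> simp [indicator, hz]
    _ = _ := by rw [integral_fun_norm_addHaar, hradial, nsmul_eq_mul, smul_eq_mul, mul_assoc]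

end Radial

variable {d : ℕ}

lemma p_nonneg {s : ℝ} (hs : 0 ≤ s) (y : EuclideanSpace ℝ (Fin d)) : 0 ≤ p d s y := by
  unfold p; positivity

lemma integral_p {s : ℝ} (hs : 0 < s) : ∫ y, p d s y = 1 := by
  have hexp : ∀ y : EuclideanSpace ℝ (Fin d), -‖y‖ ^ 2 / (2 * s) = -(2 * s)⁻¹ * ‖y‖ ^ 2 :=
    fun y => by ring
  simp only [p, hexp]
  rw [integral_const_mul, GaussianFourier.integral_rexp_neg_mul_sq_norm (by positivity),
    finrank_euclideanSpace_fin, div_inv_eq_mul, neg_div, rpow_neg (by positivity),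
    mul_comm π (2 * s), mul_right_comm 2 s π, inv_mul_cancel₀ (by positivity)]

lemma integrable_p {s : ℝ} (hs : 0 < s) : Integrable (p d s) :=
  .of_integral_ne_zero (by rw [integral_p hs]; exact one_ne_zero)

lemma p_le_of_le_norm (hd : 0 < d) {s r : ℝ} (hs : 0 < s) (hr : 0 < r)
    {y : EuclideanSpace ℝ (Fin d)} (hy : r ≤ ‖y‖) :
    p d s y ≤ (d / (2 * π * exp 1) / r ^ 2) ^ (d / 2 : ℝ) := by
  set k : ℝ := d / 2
  set v : ℝ := r ^ 2 / (2 * s)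
  have hk : 0 < k := by positivity
  have hv : 0 < v := by positivity
  have htail : exp (-v) ≤ (k / exp 1) ^ k / v ^ k := by
    rw [le_div_iff₀ (by positivity), mul_comm]
    exact rpow_mul_exp_neg_le hk hv.le
  calc p d s y ≤ (2 * π * s) ^ (-k) * exp (-v) := by
        unfold p
        rw [neg_div]
        gcongr
        rw [neg_div]
        exact neg_le_neg (div_le_div_of_nonneg_right (pow_le_pow_left₀ hr.le hy 2) (by positivity))
    _ ≤ (2 * π * s) ^ (-k) * ((k / exp 1) ^ k / v ^ k) := by gcongr
    _ = ((2 * π * s)⁻¹ * (k / exp 1 * v⁻¹)) ^ k := by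
        symm
        rw [mul_rpow (by positivity) (by positivity), mul_rpow (by positivity) (by positivity),
          inv_rpow (by positivity), inv_rpow hv.le, rpow_neg (by positivity), ← div_eq_mul_inv]
    _ = (d / (2 * π * exp 1) / r ^ 2) ^ k := by
        congr 1
        simp only [k, v]
        field_simp

lemma p_mul_norm_sub_rpow_le (hd : 0 < d) {α s r : ℝ} (hα : 0 ≤ α) (hs : 0 < s) (hr : 0 < r)
    {x : EuclideanSpace ℝ (Fin d)} (hrx : 2 * r ≤ ‖x‖) (y : EuclideanSpace ℝ (Fin d)) :
    p d s y * ‖y - x‖ ^ (-α) ≤ r ^ (-α) * p d s y +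
      (d / (2 * π * exp 1) / r ^ 2) ^ (d / 2 : ℝ) * (ball 0 r).indicator (‖·‖ ^ (-α)) (y - x) := by
  rcases le_or_gt r ‖y - x‖ with hfar | hnear
  · have hpow : ‖y - x‖ ^ (-α) ≤ r ^ (-α) := rpow_le_rpow_of_nonpos hr hfar (neg_nonpos.2 hα)
    calc p d s y * ‖y - x‖ ^ (-α) ≤ r ^ (-α) * p d s y := by
          rw [mul_comm]; exact mul_le_mul_of_nonneg_right hpow (p_nonneg hs.le y)
      _ ≤ _ := le_add_of_nonneg_right <|
          mul_nonneg (by positivity) (indicator_nonneg (fun z _ => by positivity) _)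
  · have hy : r ≤ ‖y‖ := by
      have := norm_sub_norm_le x y
      rw [norm_sub_rev] at this
      linarith
    rw [indicator_of_mem (mem_ball_zero_iff.2 hnear)]
    exact le_add_of_nonneg_of_le (mul_nonneg (by positivity) (p_nonneg hs.le y))
      (mul_le_mul_of_nonneg_right (p_le_of_le_norm hd hs hr hy) (by positivity))

noncomputable def heatPotentialConst (d : ℕ) (α : ℝ) : ℝ :=
  1 + (d / (2 * π * exp 1)) ^ (d / 2 : ℝ) *
    (d * volume.real (ball (0 : EuclideanSpace ℝ (Fin d)) 1) / (d - α))

lemma integral_p_mul_norm_sub_rpow_le {α s : ℝ} (hα0 : 0 < α) (hαd : α < d) (hs : 0 < s)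
    {x : EuclideanSpace ℝ (Fin d)} (hx : x ≠ 0) :
    ∫ y, p d s y * ‖y - x‖ ^ (-α) ≤ heatPotentialConst d α * (‖x‖ / 2) ^ (-α) := by
  have hd : 0 < d := by exact_mod_cast hα0.trans hαd
  have : Nontrivial (EuclideanSpace ℝ (Fin d)) :=
    Module.nontrivial_of_finrank_pos (R := ℝ) (by rwa [finrank_euclideanSpace_fin])
  set r := ‖x‖ / 2
  have hr : 0 < r := by have := norm_pos_iff.2 hx; positivity
  set c : ℝ := d / (2 * π * exp 1)
  set V := volume.real (ball (0 : EuclideanSpace ℝ (Fin d)) 1)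
  have hball : IntegrableOn (‖·‖ ^ (-α)) (ball (0 : EuclideanSpace ℝ (Fin d)) r) :=
    integrableOn_ball_of_norm_le_rpow (C := 1) (by rw [finrank_euclideanSpace_fin]; omega)
      (by simpa using hαd)
      (.of_forall fun z => by simp [abs_of_nonneg (by positivity : 0 ≤ ‖z‖ ^ (-α))])
      (measurable_norm.pow_const _).aestronglyMeasurable
  have hnear : Integrable fun y => (ball 0 r).indicator (‖·‖ ^ (-α)) (y - x) :=
    ((integrable_indicator_iff measurableSet_ball).2 hball).comp_sub_right x
  have hscale : (c / r ^ 2) ^ (d / 2 : ℝ) * r ^ ((d : ℝ) - α) = c ^ (d / 2 : ℝ) * r ^ (-α) := by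
    rw [div_rpow (by positivity) (by positivity), ← rpow_two, ← rpow_mul hr.le,
      div_mul_eq_mul_div, mul_div_assoc, ← rpow_sub hr]
    congr 2
    ring
  calc ∫ y, p d s y * ‖y - x‖ ^ (-α)
      ≤ ∫ y, r ^ (-α) * p d s y + (c / r ^ 2) ^ (d / 2 : ℝ) *
          (ball 0 r).indicator (‖·‖ ^ (-α)) (y - x) :=
        integral_mono_of_nonneg (.of_forall fun y => mul_nonneg (p_nonneg hs.le y) (by positivity))
          (((integrable_p hs).const_mul _).add (hnear.const_mul _))
          (.of_forall (p_mul_norm_sub_rpow_le hd hα0.le hs hr (by simp only [r]; linarith)))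
    _ = r ^ (-α) + (c / r ^ 2) ^ (d / 2 : ℝ) * (d * V * (r ^ ((d : ℝ) - α) / (d - α))) := by
        rw [integral_add ((integrable_p hs).const_mul _) (hnear.const_mul _), integral_const_mul,
          integral_const_mul, integral_p hs, integral_sub_right_eq_self
            (fun z => (ball 0 r).indicator (‖·‖ ^ (-α)) z) x, integral_indicator measurableSet_ball,
          integral_ball_norm_rpow _ (by simpa using hαd) hr, finrank_euclideanSpace_fin, mul_one]
    _ = heatPotentialConst d α * r ^ (-α) := by
        rw [heatPotentialConst]
        linear_combination (d * V / (d - α)) * hscale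

lemma heatPotentialConst_pos {α : ℝ} (hαd : α < d) : 0 < heatPotentialConst d α := by
  have : 0 < (d : ℝ) - α := by linarith
  unfold heatPotentialConst
  positivity

lemma intervalIntegral_integral_p_mul_norm_sub_rpow_le {α t : ℝ} (hα0 : 0 < α) (hαd : α < d)
    (ht : 0 ≤ t) {x : EuclideanSpace ℝ (Fin d)} (hx : x ≠ 0) :
    ∫ s in (0 : ℝ)..t, ∫ y, p d s y * ‖y - x‖ ^ (-α) ≤
      heatPotentialConst d α * t * (‖x‖ / 2) ^ (-α) := by
  have hbound : ∀ s ∈ Ioc 0 t, ‖∫ y, p d s y * ‖y - x‖ ^ (-α)‖ ≤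
      heatPotentialConst d α * (‖x‖ / 2) ^ (-α) := by
    intro s hs
    rw [norm_of_nonneg (integral_nonneg fun y => mul_nonneg (p_nonneg hs.1.le y) (by positivity))]
    exact integral_p_mul_norm_sub_rpow_le hα0 hαd hs.1 hx
  -- The sup bound on the integrand needs no integrability of `s ↦ ∫ y, …`.
  calc _ ≤ ‖∫ s in (0 : ℝ)..t, ∫ y, p d s y * ‖y - x‖ ^ (-α)‖ := le_norm_self _
    _ ≤ heatPotentialConst d α * (‖x‖ / 2) ^ (-α) * |t - 0| :=
        intervalIntegral.norm_integral_le_of_norm_le_const (uIoc_of_le ht ▸ hbound)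
    _ = _ := by rw [sub_zero, abs_of_nonneg ht]; ring

theorem corollary2_time_integrated_gaussian_bound_2d (α : ℝ) (hα0 : 0 < α) (hα2 : α < 2) :
    ∃ C : ℝ, 0 < C ∧ ∀ (x : EuclideanSpace ℝ (Fin 2)), x ≠ 0 → ∀ t : ℝ, 0 < t →
      (∫ s in (0:ℝ)..t, ∫ y : EuclideanSpace ℝ (Fin 2), p 2 s y * ‖y - x‖ ^ (-α)) ≤
        C * t * ‖x‖ ^ (-α) := by
  have hα2' : α < ((2 : ℕ) : ℝ) := by exact_mod_cast hα2
  refine ⟨heatPotentialConst 2 α * 2 ^ α, by have := heatPotentialConst_pos hα2'; positivity,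
    fun x hx t ht => ?_⟩
  have hhalf : (‖x‖ / 2) ^ (-α) = 2 ^ α * ‖x‖ ^ (-α) := by
    rw [div_rpow (norm_nonneg x) zero_le_two, rpow_neg zero_le_two, div_inv_eq_mul, mul_comm]
  calc _ ≤ heatPotentialConst 2 α * t * (‖x‖ / 2) ^ (-α) :=
        intervalIntegral_integral_p_mul_norm_sub_rpow_le hα0 hα2' ht.le hx
    _ = _ := by rw [hhalf]; ring
end
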